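/- arXiv:1803.05063 — 2 statements merged into one kernel-verified Lean document; each statement's English description precedes it below -/
import Mathlib

section
/- For the even symplectic Grassmannian IG(m, 2n), the map sending an index set p = (p₁ < ⋯ < p_m) with p_i + p_j ≠ 2n+1 for all i, j, to λ_j = 2n+1−m−p_j + #{i < j : p_i + p_j > 2n+1}, is a bijection onto the set of (n−m)-strict partitions λ = (λ₁ ≥ ⋯ ≥ λ_m ≥ 0) with λ₁ ≤ 2n−m, with inverse given by p_j = 2n+1−m−λ_j + #{i < j : λ_i + λ_j ≤ 2(n−m) + j − i}. -/
/-!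
Write `c_j = #{i < j : p_i + p_j > 2n+1}`. Everything rests on the identity, for `i < j`,
`p_i + p_j > 2n+1 ↔ λ_i + λ_j ≤ 2(n-m) + j - i`: it says that the sets counted in the two
formulas coincide, so each map undoes the other. For index sets it follows from upper and lower
bounds on `c_j` obtained by injecting the counted indices into intervals of values. For
partitions, `(n-m)`-strictness makes `λ_l + l` antitone where `λ_l > n-m`, so the set counted for
`p_j` is either all of `[i, j)` or lies inside `(i, j)`, and then the one for `p_i` is empty.
-/

open Finset

/-- `p` is an index set for the even symplectic Grassmannian `IG(m, 2n)`:
a strictly increasing sequence of integers in `[1, 2n]` with `p i + p j ≠ 2n + 1`. -/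
def IsIndexSetEven (m n : ℕ) (p : Fin m → ℤ) : Prop :=
  StrictMono p ∧ (∀ j, 1 ≤ p j ∧ p j ≤ 2 * n) ∧ ∀ i j, p i + p j ≠ 2 * n + 1

/-- `lam` is an `(n−m)`-strict partition with `m` parts, all parts `≥ 0` and
first part `≤ 2n − m`, indexing Schubert classes of `IG(m, 2n)`. -/
def IsStrictPartitionEven (m n : ℕ) (lam : Fin m → ℤ) : Prop :=
  Antitone lam ∧ (∀ j, 0 ≤ lam j) ∧ (∀ j, lam j ≤ 2 * n - m) ∧
    ∀ (j : Fin m) (h : (j : ℕ) + 1 < m),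
      (n : ℤ) - m < lam j → lam ⟨(j : ℕ) + 1, h⟩ < lam j

/-- `λ_j = 2n+1−m−p_j + #{i < j : p_i + p_j > 2n+1}`. -/
def idxToPartEven (m n : ℕ) (p : Fin m → ℤ) : Fin m → ℤ :=
  fun j => 2 * n + 1 - m - p j +
    ((univ.filter fun i : Fin m => i < j ∧ 2 * (n : ℤ) + 1 < p i + p j).card : ℤ)

/-- `p_j = 2n+1−m−λ_j + #{i < j : λ_i + λ_j ≤ 2(n−m) + j − i}`. -/
def partToIdxEven (m n : ℕ) (lam : Fin m → ℤ) : Fin m → ℤ :=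
  fun j => 2 * n + 1 - m - lam j +
    ((univ.filter fun i : Fin m =>
      i < j ∧ lam i + lam j ≤ 2 * ((n : ℤ) - m) + ((j : ℕ) : ℤ) - ((i : ℕ) : ℤ)).card : ℤ)

namespace EvenSymplectic

variable {m : ℕ}

lemma card_le_toNat_of_injOn {ι : Type*} {s : Finset ι} {f : ι → ℤ} {a b : ℤ}
    (hf : ∀ i ∈ s, f i ∈ Icc a b) (hinj : Set.InjOn f s) : #s ≤ (b + 1 - a).toNat :=
  Int.card_Icc a b ▸ card_le_card_of_injOn f hf hinj

lemma val_add_one_le_of_strictMono {p : Fin m → ℤ} (hp : StrictMono p) (h1 : ∀ j, 1 ≤ p j)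
    (j : Fin m) : (j : ℤ) + 1 ≤ p j := by
  have := card_le_toNat_of_injOn (s := Iic j) (a := 1) (b := p j)
    (fun i hi => mem_Icc.2 ⟨h1 i, hp.monotone (mem_Iic.1 hi)⟩) hp.injective.injOn
  rw [Fin.card_Iic] at this
  omega

def idxPairSet (n : ℕ) (p : Fin m → ℤ) (j : Fin m) : Finset (Fin m) :=
  {i | i < j ∧ 2 * (n : ℤ) + 1 < p i + p j}

def partPairSet (k : ℤ) (lam : Fin m → ℤ) (j : Fin m) : Finset (Fin m) :=
  {i | i < j ∧ lam i + lam j ≤ 2 * k + ((j : ℕ) : ℤ) - ((i : ℕ) : ℤ)}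

def KStrict (k : ℤ) (lam : Fin m → ℤ) : Prop :=
  ∀ (j : Fin m) (h : (j : ℕ) + 1 < m), k < lam j → lam ⟨(j : ℕ) + 1, h⟩ < lam j

lemma idxToPartEven_apply (n : ℕ) (p : Fin m → ℤ) (j : Fin m) :
    idxToPartEven m n p j = 2 * n + 1 - m - p j + #(idxPairSet n p j) := rfl

lemma partToIdxEven_apply (n : ℕ) (lam : Fin m → ℤ) (j : Fin m) :
    partToIdxEven m n lam j = 2 * n + 1 - m - lam j + #(partPairSet (n - m) lam j) := rfl

section IndexSet

variable {n : ℕ} {p : Fin m → ℤ}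

lemma mem_idxPairSet {i j : Fin m} :
    i ∈ idxPairSet n p j ↔ i < j ∧ 2 * (n : ℤ) + 1 < p i + p j := by
  simp [idxPairSet]

lemma card_idxPairSet_le_val (j : Fin m) : #(idxPairSet n p j) ≤ j :=
  Fin.card_Iio j ▸ card_le_card fun _ hi => mem_Iio.2 (mem_idxPairSet.1 hi).1

/-- The values `p i` counted here lie in `(2n + 1 - p j, p j)`, and `p` takes at most one
value of each pair `{a, 2n + 1 - a}`. -/
lemma card_idxPairSet_le_sub (hp : StrictMono p) (hne : ∀ i j, p i + p j ≠ 2 * n + 1)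
    (j : Fin m) : #(idxPairSet n p j) ≤ (p j - n - 1).toNat := by
  have key := card_le_toNat_of_injOn (s := idxPairSet n p j)
    (f := fun i => min (p i) (2 * n + 1 - p i)) (a := 2 * n + 2 - p j) (b := n) ?_ ?_
  · omega
  · intro i hi
    obtain ⟨hij, hsum⟩ := mem_idxPairSet.1 hi
    have := hp hij
    simp only [mem_Icc]
    omega
  · intro a _ b _ hab
    by_contra h
    have := hp.injective.ne h
    have := hne a b
    simp only at hab
    omega

lemma card_idxPairSet_le_of_lt (hp : StrictMono p) {i j : Fin m} (hij : i < j) :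
    #(idxPairSet n p j) ≤ (p i + p j - 2 * n - 1).toNat + ((j : ℕ) - i - 1) := by
  have hcover : idxPairSet n p j ⊆
      ({l | l ≤ i ∧ 2 * (n : ℤ) + 1 < p l + p j} : Finset (Fin m)) ∪ Ioo i j := by
    intro l hl
    obtain ⟨hlj, hsum⟩ := mem_idxPairSet.1 hl
    rcases le_or_gt l i with hli | hil
    · exact mem_union_left _ (mem_filter.2 ⟨mem_univ l, hli, hsum⟩)
    · exact mem_union_right _ (mem_Ioo.2 ⟨hil, hlj⟩)
  have hle := card_le_toNat_of_injOn (s := {l | l ≤ i ∧ 2 * (n : ℤ) + 1 < p l + p j}) (f := p)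
    (a := 2 * n + 2 - p j) (b := p i) (fun l hl => by
      obtain ⟨hli, hsum⟩ := (mem_filter.1 hl).2
      have := hp.monotone hli
      exact mem_Icc.2 ⟨by omega, this⟩) hp.injective.injOn
  have := (card_le_card hcover).trans (card_union_le _ _)
  rw [Fin.card_Ioo] at this
  omega

lemma card_idxPairSet_le_add (hp : StrictMono p) (hne : ∀ i j, p i + p j ≠ 2 * n + 1)
    {j k : Fin m} (hjk : j ≤ k) :
    (#(idxPairSet n p k) : ℤ) ≤ #(idxPairSet n p j) + (p k - p j) := by
  have hdiff := card_le_toNat_of_injOn (s := idxPairSet n p k \ idxPairSet n p j)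
    (f := fun l => if l < j then p l else 2 * n + 1 - p l)
    (a := 2 * n + 2 - p k) (b := 2 * n + 1 - p j) ?_ ?_
  · have := card_le_card_sdiff_add_card (s := idxPairSet n p k) (t := idxPairSet n p j)
    have := hp.monotone hjk
    omega
  · intro l hl
    simp only [mem_sdiff, mem_idxPairSet, not_and, not_lt] at hl
    obtain ⟨⟨hlk, hsum⟩, hlj⟩ := hl
    simp only [mem_Icc]
    split_ifs with h
    · have := hlj h
      omega
    · have := hp.monotone (not_lt.1 h)
      have := hp hlk
      omega
  · intro a _ b _ hab
    simp only at hab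
    split_ifs at hab with ha hb hb
    · exact hp.injective hab
    · exact absurd (by omega) (hne a b)
    · exact absurd (by omega) (hne b a)
    · exact hp.injective (by omega)

/-- Every `l < j` outside `idxPairSet n p j` has `p l ≤ 2n - p j`; those with `t ≤ p l`
are then counted by an interval of values. -/
lemma val_le_card_idxPairSet_add (hp : StrictMono p) (hne : ∀ i j, p i + p j ≠ 2 * n + 1)
    (j : Fin m) (t : ℤ) :
    (j : ℕ) ≤ #(idxPairSet n p j) + #{l | p l < t} + (2 * n + 1 - p j - t).toNat := by
  have hcover : Iio j ⊆
      idxPairSet n p j ∪ ({l | p l < t} : Finset (Fin m)) ∪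
        ({l | t ≤ p l ∧ p l + p j ≤ 2 * n} : Finset (Fin m)) := by
    intro l hl
    have := hne l j
    simp only [mem_Iio] at hl
    simp only [mem_union, mem_idxPairSet, mem_filter, mem_univ, hl, true_and]
    omega
  have hrest := card_le_toNat_of_injOn (s := {l | t ≤ p l ∧ p l + p j ≤ 2 * n}) (f := p)
    (a := t) (b := 2 * n - p j) (fun l hl => by
      obtain ⟨htl, hsum⟩ := (mem_filter.1 hl).2
      exact mem_Icc.2 ⟨htl, by omega⟩) hp.injective.injOn
  have := (card_le_card hcover).trans
    ((card_union_le _ _).trans (Nat.add_le_add_right (card_union_le _ _) _))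
  rw [Fin.card_Iio] at this
  omega

lemma filter_lt_eq_Iio (hp : StrictMono p) (i : Fin m) :
    ({l | p l < p i} : Finset (Fin m)) = Iio i := by
  ext l
  simp [hp.lt_iff_lt]

lemma idxToPartEven_add_le_iff (hp : StrictMono p) (hne : ∀ i j, p i + p j ≠ 2 * n + 1)
    {i j : Fin m} (hij : i < j) :
    idxToPartEven m n p i + idxToPartEven m n p j ≤
        2 * ((n : ℤ) - m) + ((j : ℕ) : ℤ) - ((i : ℕ) : ℤ) ↔
      2 * (n : ℤ) + 1 < p i + p j := by
  simp only [idxToPartEven_apply]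
  have : (i : ℕ) < j := hij
  constructor
  · intro h
    by_contra hsum
    have hlow := val_le_card_idxPairSet_add hp hne j (p i)
    rw [filter_lt_eq_Iio hp, Fin.card_Iio] at hlow
    have := hne i j
    omega
  · intro hsum
    have := hp hij
    have := card_idxPairSet_le_sub hp hne i
    have := card_idxPairSet_le_sub hp hne j
    have := card_idxPairSet_le_of_lt (n := n) hp hij
    omega

lemma partPairSet_idxToPartEven (hp : StrictMono p) (hne : ∀ i j, p i + p j ≠ 2 * n + 1)
    (j : Fin m) : partPairSet (n - m) (idxToPartEven m n p) j = idxPairSet n p j := by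
  ext i
  simp only [partPairSet, idxPairSet, mem_filter, mem_univ, true_and]
  exact and_congr_right (idxToPartEven_add_le_iff hp hne)

lemma partToIdxEven_idxToPartEven (hp : StrictMono p) (hne : ∀ i j, p i + p j ≠ 2 * n + 1) :
    partToIdxEven m n (idxToPartEven m n p) = p := by
  funext j
  rw [partToIdxEven_apply, partPairSet_idxToPartEven hp hne, idxToPartEven_apply]
  ring

lemma idxToPartEven_antitone (hp : StrictMono p) (hne : ∀ i j, p i + p j ≠ 2 * n + 1) :
    Antitone (idxToPartEven m n p) := fun j k hjk => by
  have := card_idxPairSet_le_add hp hne hjk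
  simp only [idxToPartEven_apply]
  omega

lemma idxToPartEven_nonneg (hp : StrictMono p) (hne : ∀ i j, p i + p j ≠ 2 * n + 1)
    (hb : ∀ j, 1 ≤ p j ∧ p j ≤ 2 * n) (j : Fin m) : 0 ≤ idxToPartEven m n p j := by
  obtain ⟨m', rfl⟩ := Nat.exists_eq_add_one_of_ne_zero j.pos.ne'
  refine le_trans ?_ (idxToPartEven_antitone hp hne (Fin.le_last j))
  have hlow := val_le_card_idxPairSet_add hp hne (Fin.last m') 1
  have hempty : ({l | p l < 1} : Finset (Fin (m' + 1))) = ∅ :=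
    filter_false_of_mem fun l _ => not_lt.2 (hb l).1
  have := (hb (Fin.last m')).2
  rw [hempty, card_empty, Fin.val_last] at hlow
  rw [idxToPartEven_apply]
  omega

lemma idxToPartEven_le (hp : StrictMono p) (h1 : ∀ j, 1 ≤ p j) (j : Fin m) :
    idxToPartEven m n p j ≤ 2 * n - m := by
  have := card_idxPairSet_le_val (n := n) (p := p) j
  have := val_add_one_le_of_strictMono hp h1 j
  have := j.isLt
  rw [idxToPartEven_apply]
  omega

/-- If two consecutive parts were equal and larger than `n - m`, then `j` would not be counted
for `j + 1`, and then nothing is counted for `j + 1`, forcing `λ_{j+1} < λ_j`. -/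
lemma idxToPartEven_kStrict (hp : StrictMono p) (hne : ∀ i j, p i + p j ≠ 2 * n + 1) :
    KStrict ((n : ℤ) - m) (idxToPartEven m n p) := by
  intro j h hj
  generalize hj' : (⟨(j : ℕ) + 1, h⟩ : Fin m) = j'
  have hval : (j' : ℕ) = j + 1 := by rw [← hj']
  have hjj' : j < j' := Fin.lt_def.2 (by omega)
  by_contra hle
  have hsum : ¬ 2 * (n : ℤ) + 1 < p j + p j' := by
    rw [← idxToPartEven_add_le_iff hp hne hjj']
    omega
  have := card_idxPairSet_le_of_lt (n := n) hp hjj'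
  have := hp hjj'
  simp only [idxToPartEven_apply] at hj hle ⊢
  omega

lemma isStrictPartitionEven_idxToPartEven (hp : IsIndexSetEven m n p) :
    IsStrictPartitionEven m n (idxToPartEven m n p) :=
  ⟨idxToPartEven_antitone hp.1 hp.2.2, idxToPartEven_nonneg hp.1 hp.2.2 hp.2.1,
    idxToPartEven_le hp.1 fun j => (hp.2.1 j).1, idxToPartEven_kStrict hp.1 hp.2.2⟩

end IndexSet

section Partition

variable {k : ℤ} {lam : Fin m → ℤ}

lemma mem_partPairSet {i j : Fin m} :
    i ∈ partPairSet k lam j ↔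
      i < j ∧ lam i + lam j ≤ 2 * k + ((j : ℕ) : ℤ) - ((i : ℕ) : ℤ) := by
  simp [partPairSet]

lemma card_partPairSet_le_val (j : Fin m) : #(partPairSet k lam j) ≤ j :=
  Fin.card_Iio j ▸ card_le_card fun _ hi => mem_Iio.2 (mem_partPairSet.1 hi).1

lemma partPairSet_mono (hanti : Antitone lam) {j j' : Fin m} (hjj' : j ≤ j') :
    partPairSet k lam j ⊆ partPairSet k lam j' := by
  intro i hi
  obtain ⟨hij, hsum⟩ := mem_partPairSet.1 hi
  have := hanti hjj'
  have : (j : ℕ) ≤ j' := hjj'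
  exact mem_partPairSet.2 ⟨hij.trans_le hjj', by omega⟩

lemma add_val_le_of_kStrict (hanti : Antitone lam) (hstrict : KStrict k lam) {i l : Fin m}
    (hil : i ≤ l) (hl : k < lam l) :
    lam l + ((l : ℕ) : ℤ) ≤ lam i + ((i : ℕ) : ℤ) := by
  suffices ∀ (d : ℕ) (i : Fin m), (i : ℕ) + d = l → lam l + d ≤ lam i by
    have := this ((l : ℕ) - i) i (by have : (i : ℕ) ≤ l := hil; omega)
    have : (i : ℕ) ≤ l := hil
    push_cast [this] at *
    omega
  intro d
  induction d with
  | zero =>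
    intro i h
    obtain rfl : i = l := Fin.ext (by simpa using h)
    simp
  | succ d ih =>
    intro i h
    have hi : (i : ℕ) + 1 < m := by omega
    have hstep := hstrict i hi (hl.trans_le (hanti (Fin.le_def.2 (by omega))))
    have := ih ⟨(i : ℕ) + 1, hi⟩ (by simp only; omega)
    push_cast
    linarith

lemma Ico_subset_partPairSet (hanti : Antitone lam) (hstrict : KStrict k lam) {i j : Fin m}
    (h : lam i + lam j ≤ 2 * k + ((j : ℕ) : ℤ) - ((i : ℕ) : ℤ)) :
    Ico i j ⊆ partPairSet k lam j := by
  intro l hl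
  obtain ⟨hil, hlj⟩ := mem_Ico.1 hl
  have := hanti hlj.le
  have : (l : ℕ) < j := hlj
  refine mem_partPairSet.2 ⟨hlj, ?_⟩
  by_cases hlk : k < lam l
  · have := add_val_le_of_kStrict hanti hstrict hil hlk
    omega
  · omega

lemma partPairSet_eq_empty (hanti : Antitone lam) (hstrict : KStrict k lam)
    {i j : Fin m} (hij : i < j)
    (h : 2 * k + ((j : ℕ) : ℤ) - ((i : ℕ) : ℤ) < lam i + lam j) :
    partPairSet k lam i = ∅ := by
  have := hanti hij.le
  have : (i : ℕ) < j := hij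
  refine eq_empty_of_forall_notMem fun l hl => ?_
  obtain ⟨hli, hsum⟩ := mem_partPairSet.1 hl
  have := add_val_le_of_kStrict hanti hstrict hli.le (by omega)
  omega

lemma partPairSet_subset_Ioo (hanti : Antitone lam) (hstrict : KStrict k lam)
    {i j : Fin m} (hij : i < j)
    (h : 2 * k + ((j : ℕ) : ℤ) - ((i : ℕ) : ℤ) < lam i + lam j) :
    partPairSet k lam j ⊆ Ioo i j := by
  have := hanti hij.le
  have : (i : ℕ) < j := hij
  intro l hl
  obtain ⟨hlj, hsum⟩ := mem_partPairSet.1 hl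
  refine mem_Ioo.2 ⟨lt_of_not_ge fun hli => ?_, hlj⟩
  have := add_val_le_of_kStrict hanti hstrict hli (by omega)
  omega

variable {n : ℕ}

lemma add_le_partToIdxEven_add (hanti : Antitone lam) (hstrict : KStrict ((n : ℤ) - m) lam)
    {i j : Fin m} (hij : i < j)
    (h : lam i + lam j ≤ 2 * ((n : ℤ) - m) + ((j : ℕ) : ℤ) - ((i : ℕ) : ℤ)) :
    2 * (n : ℤ) + 2 ≤ partToIdxEven m n lam i + partToIdxEven m n lam j := by
  have hcard := card_le_card (Ico_subset_partPairSet hanti hstrict h)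
  have : (i : ℕ) < j := hij
  rw [Fin.card_Ico] at hcard
  simp only [partToIdxEven_apply]
  omega

lemma partToIdxEven_add_le (hanti : Antitone lam) (hstrict : KStrict ((n : ℤ) - m) lam)
    {i j : Fin m} (hij : i < j)
    (h : 2 * ((n : ℤ) - m) + ((j : ℕ) : ℤ) - ((i : ℕ) : ℤ) < lam i + lam j) :
    partToIdxEven m n lam i + partToIdxEven m n lam j ≤ 2 * n := by
  have := card_le_card (partPairSet_subset_Ioo hanti hstrict hij h)
  rw [Fin.card_Ioo] at this
  simp only [partToIdxEven_apply, partPairSet_eq_empty hanti hstrict hij h, card_empty]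
  omega

lemma partToIdxEven_add_ne (hanti : Antitone lam) (hstrict : KStrict ((n : ℤ) - m) lam)
    (i j : Fin m) :
    partToIdxEven m n lam i + partToIdxEven m n lam j ≠ 2 * n + 1 := by
  have hlt {i j : Fin m} (hij : i < j) :
      partToIdxEven m n lam i + partToIdxEven m n lam j ≠ 2 * n + 1 := by
    by_cases h : lam i + lam j ≤ 2 * ((n : ℤ) - m) + ((j : ℕ) : ℤ) - ((i : ℕ) : ℤ)
    · have := add_le_partToIdxEven_add hanti hstrict hij h
      omega
    · have := partToIdxEven_add_le hanti hstrict hij (not_le.1 h)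
      omega
  rcases lt_trichotomy i j with hij | rfl | hji
  · exact hlt hij
  · omega
  · rw [add_comm]
    exact hlt hji

lemma idxPairSet_partToIdxEven (hanti : Antitone lam) (hstrict : KStrict ((n : ℤ) - m) lam)
    (j : Fin m) :
    idxPairSet n (partToIdxEven m n lam) j = partPairSet (n - m) lam j := by
  ext i
  simp only [partPairSet, idxPairSet, mem_filter, mem_univ, true_and]
  refine and_congr_right fun hij => ⟨fun hsum => ?_, fun h => ?_⟩
  · by_contra h
    have := partToIdxEven_add_le hanti hstrict hij (not_le.1 h)
    omega
  · have := add_le_partToIdxEven_add hanti hstrict hij h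
    omega

lemma idxToPartEven_partToIdxEven (hanti : Antitone lam)
    (hstrict : KStrict ((n : ℤ) - m) lam) : idxToPartEven m n (partToIdxEven m n lam) = lam := by
  funext j
  rw [idxToPartEven_apply, idxPairSet_partToIdxEven hanti hstrict, partToIdxEven_apply]
  ring

/-- When `lam j = lam j'` the part must be at most `n - m`, so `j` itself is counted for `j'`. -/
lemma partToIdxEven_strictMono (hanti : Antitone lam)
    (hstrict : KStrict ((n : ℤ) - m) lam) : StrictMono (partToIdxEven m n lam) := by
  intro j j' hjj'
  have hsub := partPairSet_mono (k := (n : ℤ) - m) hanti hjj'.le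
  have : (j : ℕ) < j' := hjj'
  simp only [partToIdxEven_apply]
  rcases (hanti hjj'.le).lt_or_eq with hlt | heq
  · have := card_le_card hsub
    omega
  · have hle : lam j ≤ n - m := by
      by_contra hgt
      have := add_val_le_of_kStrict hanti hstrict hjj'.le (heq ▸ not_le.1 hgt)
      omega
    have hj : j ∈ partPairSet (n - m) lam j' := mem_partPairSet.2 ⟨hjj', by omega⟩
    have := card_lt_card ((ssubset_iff_of_subset hsub).2
      ⟨j, hj, fun h => lt_irrefl _ (mem_partPairSet.1 h).1⟩)
    omega

lemma partToIdxEven_mem_Icc (h0 : ∀ j, 0 ≤ lam j) (hup : ∀ j, lam j ≤ 2 * n - m)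
    (j : Fin m) :
    1 ≤ partToIdxEven m n lam j ∧ partToIdxEven m n lam j ≤ 2 * n := by
  have := card_partPairSet_le_val (k := (n : ℤ) - m) (lam := lam) j
  have := j.isLt
  have := h0 j
  have := hup j
  rw [partToIdxEven_apply]
  omega

end Partition

lemma isIndexSetEven_partToIdxEven {n : ℕ} {lam : Fin m → ℤ}
    (hlam : IsStrictPartitionEven m n lam) :
    IsIndexSetEven m n (partToIdxEven m n lam) :=
  ⟨partToIdxEven_strictMono hlam.1 hlam.2.2.2, partToIdxEven_mem_Icc hlam.2.1 hlam.2.2.1,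
    partToIdxEven_add_ne hlam.1 hlam.2.2.2⟩

end EvenSymplectic

open EvenSymplectic in
theorem even_symplectic_index_partition_bijection_general (m n : ℕ) :
    (∀ p : Fin m → ℤ, IsIndexSetEven m n p →
      IsStrictPartitionEven m n (idxToPartEven m n p) ∧
        partToIdxEven m n (idxToPartEven m n p) = p) ∧
    (∀ lam : Fin m → ℤ, IsStrictPartitionEven m n lam →
      IsIndexSetEven m n (partToIdxEven m n lam) ∧
        idxToPartEven m n (partToIdxEven m n lam) = lam) :=
  ⟨fun _ hp => ⟨isStrictPartitionEven_idxToPartEven hp,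
      partToIdxEven_idxToPartEven hp.1 hp.2.2⟩,
    fun _ hlam => ⟨isIndexSetEven_partToIdxEven hlam,
      idxToPartEven_partToIdxEven hlam.1 hlam.2.2.2⟩⟩

/-- The map `p ↦ λ` is a bijection between index sets for `IG(m, 2n)` and
`(n−m)`-strict partitions `λ` with `λ₁ ≤ 2n−m`, `λ_m ≥ 0`, with the stated inverse. -/
theorem even_symplectic_index_partition_bijection (m n : ℕ) (hm : 0 < m) (hmn : m ≤ n) :
    (∀ p : Fin m → ℤ, IsIndexSetEven m n p →
      IsStrictPartitionEven m n (idxToPartEven m n p) ∧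
        partToIdxEven m n (idxToPartEven m n p) = p) ∧
    (∀ lam : Fin m → ℤ, IsStrictPartitionEven m n lam →
      IsIndexSetEven m n (partToIdxEven m n lam) ∧
        idxToPartEven m n (partToIdxEven m n lam) = lam) :=
  even_symplectic_index_partition_bijection_general m n
end

section
/- The quantum Chevalley operator for the G₂-horospherical variety X (case (5)) is semisimple with distinct nonzero eigenvalues after specializing q = 1: the 12 × 12 matrix of multiplication by h on the basis (1, h, σ'_{u₂}, τ_{v₀}, σ'_{u₃}, τ_{v₁}, σ'_{u₄}, τ_{v₂}, σ'_{u₅}, τ_{v₃}, τ_{v₄}, τ_{v₅}) determined by the relations h*1 = h; h*h = 3σ'_{u₂} + τ_{v₀}; h*σ'_{u₂} = 2σ'_{u₃} + τ_{v₁}; h*τ_{v₀} = τ_{v₁}; h*σ'_{u₃} = 3σ'_{u₄} + τ_{v₂}; h*τ_{v₁} = τ_{v₂} + 1; h*σ'_{u₄} = σ'_{u₅} + τ_{v₃}; h*τ_{v₂} = 2τ_{v₃} + h; h*σ'_{u₅} = τ_{v₄} + τ_{v₀}; h*τ_{v₃} = τ_{v₄} + σ'_{u₂}; h*τ_{v₄}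 = τ_{v₅} + σ'_{u₃} + τ_{v₁}; h*τ_{v₅} = σ'_{u₄} + τ_{v₂} + 2, has 12 pairwise distinct eigenvalues over the complex numbers (equivalently, its characteristic polynomial is squarefree). -/
open Polynomial

/-- The matrix of quantum multiplication by the hyperplane class `h` on
`QH(X)|_{q=1}` for the `G₂`-horospherical variety `X` (case (5)), in the basis
`(1, h, σ'_{u₂}, τ_{v₀}, σ'_{u₃}, τ_{v₁}, σ'_{u₄}, τ_{v₂}, σ'_{u₅}, τ_{v₃}, τ_{v₄}, τ_{v₅})`,
determined by the quantum Chevalley formulas of the paper. Entry `(i, j)` is the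
coefficient of the `i`-th basis vector in `h * (j-th basis vector)`. -/
def G2ChevalleyMatrix : Matrix (Fin 12) (Fin 12) ℤ :=
  !![0,0,0,0,0,1,0,0,0,0,0,2;
     1,0,0,0,0,0,0,1,0,0,0,0;
     0,3,0,0,0,0,0,0,0,1,0,0;
     0,1,0,0,0,0,0,0,1,0,0,0;
     0,0,2,0,0,0,0,0,0,0,1,0;
     0,0,1,1,0,0,0,0,0,0,1,0;
     0,0,0,0,3,0,0,0,0,0,0,1;
     0,0,0,0,1,1,0,0,0,0,0,1;
     0,0,0,0,0,0,1,0,0,0,0,0;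
     0,0,0,0,0,0,1,2,0,0,0,0;
     0,0,0,0,0,0,0,0,1,1,0,0;
     0,0,0,0,0,0,0,0,0,0,1,0]

def G2Pow : Fin 13 → Matrix (Fin 12) (Fin 12) ℤ :=
  ![!![1,0,0,0,0,0,0,0,0,0,0,0;
     0,1,0,0,0,0,0,0,0,0,0,0;
     0,0,1,0,0,0,0,0,0,0,0,0;
     0,0,0,1,0,0,0,0,0,0,0,0;
     0,0,0,0,1,0,0,0,0,0,0,0;
     0,0,0,0,0,1,0,0,0,0,0,0;
     0,0,0,0,0,0,1,0,0,0,0,0;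
     0,0,0,0,0,0,0,1,0,0,0,0;
     0,0,0,0,0,0,0,0,1,0,0,0;
     0,0,0,0,0,0,0,0,0,1,0,0;
     0,0,0,0,0,0,0,0,0,0,1,0;
     0,0,0,0,0,0,0,0,0,0,0,1],
  !![0,0,0,0,0,1,0,0,0,0,0,2;
     1,0,0,0,0,0,0,1,0,0,0,0;
     0,3,0,0,0,0,0,0,0,1,0,0;
     0,1,0,0,0,0,0,0,1,0,0,0;
     0,0,2,0,0,0,0,0,0,0,1,0;
     0,0,1,1,0,0,0,0,0,0,1,0;
     0,0,0,0,3,0,0,0,0,0,0,1;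
     0,0,0,0,1,1,0,0,0,0,0,1;
     0,0,0,0,0,0,1,0,0,0,0,0;
     0,0,0,0,0,0,1,2,0,0,0,0;
     0,0,0,0,0,0,0,0,1,1,0,0;
     0,0,0,0,0,0,0,0,0,0,1,0],
  !![0,0,1,1,0,0,0,0,0,0,3,0;
     0,0,0,0,1,2,0,0,0,0,0,3;
     3,0,0,0,0,0,1,5,0,0,0,0;
     1,0,0,0,0,0,1,1,0,0,0,0;
     0,6,0,0,0,0,0,0,1,3,0,0;
     0,4,0,0,0,0,0,0,2,2,0,0;
     0,0,6,0,0,0,0,0,0,0,4,0;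
     0,0,3,1,0,0,0,0,0,0,3,0;
     0,0,0,0,3,0,0,0,0,0,0,1;
     0,0,0,0,5,2,0,0,0,0,0,3;
     0,0,0,0,0,0,2,2,0,0,0,0;
     0,0,0,0,0,0,0,0,1,1,0,0],
  !![0,4,0,0,0,0,0,0,4,4,0,0;
     0,0,4,2,0,0,0,0,0,0,6,0;
     0,0,0,0,8,8,0,0,0,0,0,12;
     0,0,0,0,4,2,0,0,0,0,0,4;
     6,0,0,0,0,0,4,12,0,0,0,0;
     4,0,0,0,0,0,4,8,0,0,0,0;
     0,18,0,0,0,0,0,0,4,10,0,0;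
     0,10,0,0,0,0,0,0,4,6,0,0;
     0,0,6,0,0,0,0,0,0,0,4,0;
     0,0,12,2,0,0,0,0,0,0,10,0;
     0,0,0,0,8,2,0,0,0,0,0,4;
     0,0,0,0,0,0,2,2,0,0,0,0],
  !![4,0,0,0,0,0,8,12,0,0,0,0;
     0,14,0,0,0,0,0,0,8,10,0,0;
     0,0,24,8,0,0,0,0,0,0,28,0;
     0,0,10,2,0,0,0,0,0,0,10,0;
     0,0,0,0,24,18,0,0,0,0,0,28;
     0,0,0,0,20,12,0,0,0,0,0,20;
     18,0,0,0,0,0,14,38,0,0,0,0;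
     10,0,0,0,0,0,10,22,0,0,0,0;
     0,18,0,0,0,0,0,0,4,10,0,0;
     0,38,0,0,0,0,0,0,12,22,0,0;
     0,0,18,2,0,0,0,0,0,0,14,0;
     0,0,0,0,8,2,0,0,0,0,0,4],
  !![0,0,0,0,36,16,0,0,0,0,0,28;
     14,0,0,0,0,0,18,34,0,0,0,0;
     0,80,0,0,0,0,0,0,36,52,0,0;
     0,32,0,0,0,0,0,0,12,20,0,0;
     0,0,66,18,0,0,0,0,0,0,70,0;
     0,0,52,12,0,0,0,0,0,0,52,0;
     0,0,0,0,80,56,0,0,0,0,0,88;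
     0,0,0,0,52,32,0,0,0,0,0,52;
     18,0,0,0,0,0,14,38,0,0,0,0;
     38,0,0,0,0,0,34,82,0,0,0,0;
     0,56,0,0,0,0,0,0,16,32,0,0;
     0,0,18,2,0,0,0,0,0,0,14,0],
  !![0,0,88,16,0,0,0,0,0,0,80,0;
     0,0,0,0,88,48,0,0,0,0,0,80;
     80,0,0,0,0,0,88,184,0,0,0,0;
     32,0,0,0,0,0,32,72,0,0,0,0;
     0,216,0,0,0,0,0,0,88,136,0,0;
     0,168,0,0,0,0,0,0,64,104,0,0;
     0,0,216,56,0,0,0,0,0,0,224,0;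
     0,0,136,32,0,0,0,0,0,0,136,0;
     0,0,0,0,80,56,0,0,0,0,0,88;
     0,0,0,0,184,120,0,0,0,0,0,192;
     56,0,0,0,0,0,48,120,0,0,0,0;
     0,56,0,0,0,0,0,0,16,32,0,0],
  !![0,280,0,0,0,0,0,0,96,168,0,0;
     0,0,224,48,0,0,0,0,0,0,216,0;
     0,0,0,0,448,264,0,0,0,0,0,432;
     0,0,0,0,168,104,0,0,0,0,0,168;
     216,0,0,0,0,0,224,488,0,0,0,0;
     168,0,0,0,0,0,168,376,0,0,0,0;
     0,704,0,0,0,0,0,0,280,440,0,0;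
     0,440,0,0,0,0,0,0,168,272,0,0;
     0,0,216,56,0,0,0,0,0,0,224,0;
     0,0,488,120,0,0,0,0,0,0,496,0;
     0,0,0,0,264,176,0,0,0,0,0,280;
     56,0,0,0,0,0,48,120,0,0,0,0],
  !![280,0,0,0,0,0,264,616,0,0,0,0;
     0,720,0,0,0,0,0,0,264,440,0,0;
     0,0,1160,264,0,0,0,0,0,0,1144,0;
     0,0,440,104,0,0,0,0,0,0,440,0;
     0,0,0,0,1160,704,0,0,0,0,0,1144;
     0,0,0,0,880,544,0,0,0,0,0,880;
     704,0,0,0,0,0,720,1584,0,0,0,0;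
     440,0,0,0,0,0,440,984,0,0,0,0;
     0,704,0,0,0,0,0,0,280,440,0,0;
     0,1584,0,0,0,0,0,0,616,984,0,0;
     0,0,704,176,0,0,0,0,0,0,720,0;
     0,0,0,0,264,176,0,0,0,0,0,280],
  !![0,0,0,0,1408,896,0,0,0,0,0,1440;
     720,0,0,0,0,0,704,1600,0,0,0,0;
     0,3744,0,0,0,0,0,0,1408,2304,0,0;
     0,1424,0,0,0,0,0,0,544,880,0,0;
     0,0,3024,704,0,0,0,0,0,0,3008,0;
     0,0,2304,544,0,0,0,0,0,0,2304,0;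
     0,0,0,0,3744,2288,0,0,0,0,0,3712;
     0,0,0,0,2304,1424,0,0,0,0,0,2304;
     704,0,0,0,0,0,720,1584,0,0,0,0;
     1584,0,0,0,0,0,1600,3552,0,0,0,0;
     0,2288,0,0,0,0,0,0,896,1424,0,0;
     0,0,704,176,0,0,0,0,0,0,720,0],
  !![0,0,3712,896,0,0,0,0,0,0,3744,0;
     0,0,0,0,3712,2320,0,0,0,0,0,3744;
     3744,0,0,0,0,0,3712,8352,0,0,0,0;
     1424,0,0,0,0,0,1424,3184,0,0,0,0;
     0,9776,0,0,0,0,0,0,3712,6032,0,0;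
     0,7456,0,0,0,0,0,0,2848,4608,0,0;
     0,0,9776,2288,0,0,0,0,0,0,9744,0;
     0,0,6032,1424,0,0,0,0,0,0,6032,0;
     0,0,0,0,3744,2288,0,0,0,0,0,3712;
     0,0,0,0,8352,5136,0,0,0,0,0,8320;
     2288,0,0,0,0,0,2320,5136,0,0,0,0;
     0,2288,0,0,0,0,0,0,896,1424,0,0],
  !![0,12032,0,0,0,0,0,0,4640,7456,0,0;
     0,0,9744,2320,0,0,0,0,0,0,9776,0;
     0,0,0,0,19488,12096,0,0,0,0,0,19552;
     0,0,0,0,7456,4608,0,0,0,0,0,7456;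
     9776,0,0,0,0,0,9744,21840,0,0,0,0;
     7456,0,0,0,0,0,7456,16672,0,0,0,0;
     0,31616,0,0,0,0,0,0,12032,19520,0,0;
     0,19520,0,0,0,0,0,0,7456,12064,0,0;
     0,0,9776,2288,0,0,0,0,0,0,9744,0;
     0,0,21840,5136,0,0,0,0,0,0,21808,0;
     0,0,0,0,12096,7424,0,0,0,0,0,12032;
     2288,0,0,0,0,0,2320,5136,0,0,0,0],
  !![12032,0,0,0,0,0,12096,26944,0,0,0,0;
     0,31552,0,0,0,0,0,0,12096,19520,0,0;
     0,0,51072,12096,0,0,0,0,0,0,51136,0;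
     0,0,19520,4608,0,0,0,0,0,0,19520,0;
     0,0,0,0,51072,31616,0,0,0,0,0,51136;
     0,0,0,0,39040,24128,0,0,0,0,0,39040;
     31616,0,0,0,0,0,31552,70656,0,0,0,0;
     19520,0,0,0,0,0,19520,43648,0,0,0,0;
     0,31616,0,0,0,0,0,0,12032,19520,0,0;
     0,70656,0,0,0,0,0,0,26944,43648,0,0;
     0,0,31616,7424,0,0,0,0,0,0,31552,0;
     0,0,0,0,12096,7424,0,0,0,0,0,12032]]

def G2Krylov : Matrix (Fin 12) (Fin 12) ℤ :=
  !![1,0,0,0,4,0,0,0,280,0,0,0;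
     0,1,0,0,0,14,0,0,0,720,0,0;
     0,0,3,0,0,0,80,0,0,0,3744,0;
     0,0,1,0,0,0,32,0,0,0,1424,0;
     0,0,0,6,0,0,0,216,0,0,0,9776;
     0,0,0,4,0,0,0,168,0,0,0,7456;
     0,0,0,0,18,0,0,0,704,0,0,0;
     0,0,0,0,10,0,0,0,440,0,0,0;
     0,0,0,0,0,18,0,0,0,704,0,0;
     0,0,0,0,0,38,0,0,0,1584,0,0;
     0,0,0,0,0,0,56,0,0,0,2288,0;
     0,0,0,0,0,0,0,56,0,0,0,2288]

def G2KrylovInv : Matrix (Fin 12) (Fin 12) ℤ :=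
  !![153522012160000,0,0,0,0,0,181435105280000,-387991994368000,0,0,0,0;
     0,153522012160000,0,0,0,0,0,0,452192108544000,-270757003264000,0,0;
     0,0,-142356774912000,580592336896000,0,0,0,0,0,0,-128400228352000,0;
     0,0,0,0,-361474555904000,580592336896000,0,0,0,0,0,-347518009344000;
     0,0,0,0,0,0,76761006080000,-122817609728000,0,0,0,0;
     0,0,0,0,0,0,0,0,138169810944000,-61408804864000,0,0;
     0,0,-49894653952000,149683961856000,0,0,0,0,0,0,-11514150912000,0;
     0,0,0,0,-99789307904000,149683961856000,0,0,0,0,0,-61408804864000;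
     0,0,0,0,0,0,-1744568320000,3140222976000,0,0,0,0;
     0,0,0,0,0,0,0,0,-3314679808000,1570111488000,0,0;
     0,0,1221197824000,-3663593472000,0,0,0,0,0,0,348913664000,0;
     0,0,0,0,2442395648000,-3663593472000,0,0,0,0,0,1570111488000]


set_option maxRecDepth 1000000
set_option maxHeartbeats 8000000

theorem G2Pow_zero : G2Pow 0 = 1 := by decide

theorem G2Pow_step : ∀ k : Fin 12, G2ChevalleyMatrix * G2Pow k.castSucc = G2Pow k.succ := by
  decide

theorem G2Cayley_lit : G2Pow 12 = 40 * G2Pow 8 + 192 * G2Pow 4 + 64 := by decide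

theorem G2Krylov_col : ∀ i j : Fin 12, G2Krylov i j = G2Pow j.castSucc i 0 :=
  @of_decide_eq_true _ (@Nat.decidableForallFin _ _ fun _ => @Nat.decidableForallFin _ _ fun _ => Int.instDecidableEq _ _) rfl

theorem G2KrylovMul : G2Krylov * G2KrylovInv = 153522012160000 := by decide


noncomputable section

open Polynomial Matrix

/-- The candidate characteristic polynomial. -/
def G2q : ℂ[X] := X^12 - 40*X^8 - 192*X^4 - 64

theorem G2q_monic : G2q.Monic := by
  unfold G2q
  monicity!

theorem G2q_natDegree : G2q.natDegree = 12 := by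
  unfold G2q
  compute_degree!

/-- The complex Chevalley matrix. -/
def G2Mc : Matrix (Fin 12) (Fin 12) ℂ := G2ChevalleyMatrix.map ((↑) : ℤ → ℂ)

def G2phi : Matrix (Fin 12) (Fin 12) ℤ →+* Matrix (Fin 12) (Fin 12) ℂ :=
  (Int.castRingHom ℂ).mapMatrix

theorem G2Mc_eq : G2Mc = G2phi G2ChevalleyMatrix := rfl

theorem G2pow_int : ∀ k : ℕ, (hk : k < 13) → G2ChevalleyMatrix ^ k = G2Pow ⟨k, hk⟩ := by
  intro k
  induction k with
  | zero => intro hk; simpa using G2Pow_zero.symm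
  | succ n ih =>
    intro hk
    rw [pow_succ', ih (by omega)]
    exact G2Pow_step ⟨n, by omega⟩

theorem G2Cayley_int :
    G2ChevalleyMatrix ^ 12 = 40 * G2ChevalleyMatrix ^ 8 + 192 * G2ChevalleyMatrix ^ 4 + 64 := by
  rw [G2pow_int 12 (by norm_num), G2pow_int 8 (by norm_num), G2pow_int 4 (by norm_num)]
  exact G2Cayley_lit

theorem G2Cayley_c : G2Mc ^ 12 = 40 * G2Mc ^ 8 + 192 * G2Mc ^ 4 + 64 := by
  have h := congrArg G2phi G2Cayley_int
  simpa [G2Mc_eq, map_pow, _root_.map_mul, map_add, map_ofNat] using h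

theorem G2_aeval_q : aeval G2Mc G2q = 0 := by
  rw [G2q]
  simp only [map_sub, _root_.map_mul, map_pow, aeval_X, map_ofNat]
  rw [G2Cayley_c]
  noncomm_ring

end

noncomputable section
open Polynomial Matrix

theorem G2_isIntegral : IsIntegral ℂ G2Mc :=
  ⟨G2Mc.charpoly, G2Mc.charpoly_monic, G2Mc.aeval_self_charpoly⟩

theorem G2_minpoly_deg : 12 ≤ (minpoly ℂ G2Mc).natDegree := by
  by_contra hlt
  push_neg at hlt
  set r := minpoly ℂ G2Mc with hr
  have hmon : r.Monic := minpoly.monic G2_isIntegral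
  -- complex Krylov matrix and its inverse
  set Kc : Matrix (Fin 12) (Fin 12) ℂ := G2Krylov.map ((↑) : ℤ → ℂ) with hKc
  set Lc : Matrix (Fin 12) (Fin 12) ℂ := G2KrylovInv.map ((↑) : ℤ → ℂ) with hLc
  have hKL : Kc * Lc = (153522012160000 : ℂ) • 1 := by
    have h := congrArg G2phi G2KrylovMul
    rw [_root_.map_mul, map_ofNat] at h
    simp only [G2phi, RingHom.mapMatrix_apply, Int.coe_castRingHom] at h
    rw [hKc, hLc, h, ← map_ofNat (algebraMap ℂ (Matrix (Fin 12) (Fin 12) ℂ)) 153522012160000,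
      Algebra.algebraMap_eq_smul_one]
  have hKL1 : Kc * ((153522012160000 : ℂ)⁻¹ • Lc) = 1 := by
    rw [Matrix.mul_smul, hKL, smul_smul, inv_mul_cancel₀ (by norm_num), one_smul]
  have hinv : Invertible Kc := invertibleOfRightInverse _ _ hKL1
  -- the coefficient vector of the minimal polynomial
  set c : Fin 12 → ℂ := fun j => r.coeff j with hc
  have hpowc : ∀ j : Fin 12, G2Mc ^ (j : ℕ) = G2phi (G2Pow j.castSucc) := by
    intro j
    rw [G2Mc_eq, ← map_pow, G2pow_int j (by omega)]
    rfl
  have hKentry : ∀ i j : Fin 12, Kc i j = (G2Mc ^ (j : ℕ)) i 0 := by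
    intro i j
    rw [hpowc j]
    simp only [hKc, Matrix.map_apply, G2Krylov_col i j, G2phi, RingHom.mapMatrix_apply,
      Int.coe_castRingHom]
  have haev : aeval G2Mc r = 0 := minpoly.aeval ℂ G2Mc
  have hsum : ∑ k ∈ Finset.range 12, r.coeff k • G2Mc ^ k = 0 := by
    rw [← Polynomial.aeval_eq_sum_range' (n := 12) (by omega) G2Mc]
    exact haev
  have hmv : Kc.mulVec c = 0 := by
    funext i
    have hent := congrFun (congrFun hsum i) 0
    simp only [Matrix.sum_apply, Matrix.smul_apply, Matrix.zero_apply, smul_eq_mul] at hent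
    rw [← Fin.sum_univ_eq_sum_range (fun k => r.coeff k * (G2Mc ^ k) i 0) 12] at hent
    simp only [Matrix.mulVec, dotProduct, Pi.zero_apply]
    rw [← hent]
    exact Finset.sum_congr rfl fun j _ => by beta_reduce; rw [hKentry i j, hc, mul_comm]
  have hc0 : c = 0 := by
    have := congrArg (fun v => (⅟Kc).mulVec v) hmv
    simpa [Matrix.mulVec_mulVec, invOf_mul_self Kc] using this
  have hd : (r.natDegree : ℕ) < 12 := hlt
  have h1 : c ⟨r.natDegree, hd⟩ = 1 := by
    simp only [hc]
    exact hmon.coeff_natDegree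
  rw [hc0] at h1
  simp at h1

end


noncomputable section
open Polynomial Matrix

theorem G2_charpoly_eq : G2Mc.charpoly = G2q := by
  have hdvd_q : minpoly ℂ G2Mc ∣ G2q := minpoly.dvd ℂ G2Mc G2_aeval_q
  have hdvd_c : minpoly ℂ G2Mc ∣ G2Mc.charpoly :=
    minpoly.dvd ℂ G2Mc (G2Mc.aeval_self_charpoly)
  have hmin_mon : (minpoly ℂ G2Mc).Monic := minpoly.monic G2_isIntegral
  have hq_eq : G2q = minpoly ℂ G2Mc :=
    Polynomial.eq_of_monic_of_dvd_of_natDegree_le hmin_mon G2q_monic hdvd_q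
      (by rw [G2q_natDegree]; exact G2_minpoly_deg)
  have hc_eq : G2Mc.charpoly = minpoly ℂ G2Mc :=
    Polynomial.eq_of_monic_of_dvd_of_natDegree_le hmin_mon G2Mc.charpoly_monic hdvd_c
      (by rw [Matrix.charpoly_natDegree_eq_dim, Fintype.card_fin]; exact G2_minpoly_deg)
  rw [hc_eq, hq_eq]

theorem G2q_deriv : derivative G2q = 12*X^11 - 320*X^7 - 768*X^3 := by
  unfold G2q
  simp only [derivative_sub, derivative_mul, derivative_X_pow, derivative_ofNat, map_ofNat, map_natCast, Nat.cast_ofNat]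
  ring

theorem G2q_separable : G2q.Separable := by
  have key : ((10476:ℂ[X])*X^8 - 285888*X^4 - 484000) * G2q
      + (-(873:ℂ[X])*X^9 + 35464*X^5 + 144824*X) * (derivative G2q)
      = (30976000 : ℂ[X]) := by
    rw [G2q_deriv]; unfold G2q; ring
  refine ⟨C (30976000:ℂ)⁻¹ * ((10476:ℂ[X])*X^8 - 285888*X^4 - 484000),
    C (30976000:ℂ)⁻¹ * (-(873:ℂ[X])*X^9 + 35464*X^5 + 144824*X), ?_⟩
  rw [mul_assoc, mul_assoc, ← mul_add, key,
    (map_ofNat C 30976000).symm,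
    ← C_mul, inv_mul_cancel₀ (by norm_num), C_1]

/-- The quantum Chevalley operator of the `G₂`-horospherical variety has `12` pairwise
distinct complex eigenvalues; equivalently its characteristic polynomial is squarefree. -/
theorem G2_chevalley_distinct_eigenvalues :
    (∃ ev : Fin 12 → ℂ, Function.Injective ev ∧
      (G2ChevalleyMatrix.map ((↑) : ℤ → ℂ)).charpoly = ∏ i, (X - C (ev i))) ∧
    Squarefree (G2ChevalleyMatrix.map ((↑) : ℤ → ℂ)).charpoly := by
  have hcp : (G2ChevalleyMatrix.map ((↑) : ℤ → ℂ)).charpoly = G2q := G2_charpoly_eq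
  rw [hcp]
  constructor
  · -- distinct eigenvalues
    have hsplits : G2q.Splits := IsAlgClosed.splits G2q
    have hcard : Multiset.card G2q.roots = 12 := by
      rw [Polynomial.splits_iff_card_roots.mp hsplits, G2q_natDegree]
    have hnodup : G2q.roots.Nodup := Polynomial.nodup_roots G2q_separable
    set l : List ℂ := G2q.roots.toList with hl
    have hlen : l.length = 12 := by rw [hl, Multiset.length_toList, hcard]
    have hlnd : l.Nodup := by rw [hl, ← Multiset.coe_nodup, Multiset.coe_toList]; exact hnodup
    refine ⟨fun i => l.get (Fin.cast hlen.symm i), ?_, ?_⟩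
    · exact (List.nodup_iff_injective_get.mp hlnd).comp (Fin.cast_injective _)
    · have hprod : G2q = (G2q.roots.map fun a => X - C a).prod :=
        hsplits.eq_prod_roots_of_monic G2q_monic
      rw [hprod]
      have : G2q.roots = (l : Multiset ℂ) := (Multiset.coe_toList _).symm
      rw [this, Multiset.map_coe, Multiset.prod_coe]
      rw [← Fin.prod_univ_fun_getElem l (fun a => X - C a)]
      exact (Fintype.prod_equiv (finCongr hlen.symm) _ _ (fun i => rfl)).symm
  · exact G2q_separable.squarefree


end
end
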